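/- arXiv:2309.05617 — 6 statements merged into one kernel-verified Lean document; each statement's English description precedes it below -/
import Mathlib

section
/- If smooth functions P, Q of one real variable satisfy the identity (1-pq)²Q''(q) + 6p(1-pq)Q'(q) + 12p²Q(q) = (1-pq)²P''(p) + 6q(1-pq)P'(p) + 12q²P(p) for all real p, q, then applying ∂²/∂q² followed by ∂²/∂p² yields q²Q''''(q) - 2qQ'''(q) + 2Q''(q) = p²P''''(p) - 2pP'''(p) + 2P''(p) for all p, q. -/
theorem stmt_0 (P Q : ℝ → ℝ) (hP : ContDiff ℝ (⊤ : ℕ∞) P) (hQ : ContDiff ℝ (⊤ : ℕ∞) Q)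
    (h : ∀ p q : ℝ,
      (1 - p*q)^2 * iteratedDeriv 2 Q q + 6*p*(1 - p*q) * deriv Q q + 12*p^2 * Q q =
      (1 - p*q)^2 * iteratedDeriv 2 P p + 6*q*(1 - p*q) * deriv P p + 12*q^2 * P p) :
    ∀ p q : ℝ,
      q^2 * iteratedDeriv 4 Q q - 2*q * iteratedDeriv 3 Q q + 2 * iteratedDeriv 2 Q q =
      p^2 * iteratedDeriv 4 P p - 2*p * iteratedDeriv 3 P p + 2 * iteratedDeriv 2 P p := by
  have hPd : ∀ (n : ℕ) (x : ℝ), HasDerivAt (iteratedDeriv n P) (iteratedDeriv (n+1) P x) x := by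
    intro n x
    rw [iteratedDeriv_succ]
    exact ((hP.differentiable_iteratedDeriv n (by exact_mod_cast lt_top_iff_ne_top.2 (by simp))) x).hasDerivAt
  have hQd : ∀ (n : ℕ) (x : ℝ), HasDerivAt (iteratedDeriv n Q) (iteratedDeriv (n+1) Q x) x := by
    intro n x
    rw [iteratedDeriv_succ]
    exact ((hQ.differentiable_iteratedDeriv n (by exact_mod_cast lt_top_iff_ne_top.2 (by simp))) x).hasDerivAt
  have hP0 : ∀ x : ℝ, HasDerivAt P (iteratedDeriv 1 P x) x := by
    intro x; have := hPd 0 x; rwa [iteratedDeriv_zero] at this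
  have hQ0 : ∀ x : ℝ, HasDerivAt Q (iteratedDeriv 1 Q x) x := by
    intro x; have := hQd 0 x; rwa [iteratedDeriv_zero] at this
  simp only [← iteratedDeriv_one] at h
  -- Step 1: differentiate in p
  have E0 : ∀ q p : ℝ,
      (6 - 12*q*p)*iteratedDeriv 1 Q q - 2*q*(1-p*q)*iteratedDeriv 2 Q q + 24*p*Q q =
      (1-p*q)^2*iteratedDeriv 3 P p + 4*q*(1-p*q)*iteratedDeriv 2 P p
        + 6*q^2*iteratedDeriv 1 P p := by
    intro q p
    have hu : HasDerivAt (fun x : ℝ => 1 - x*q) (0 - 1*q) p :=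
      (hasDerivAt_const p 1).sub ((hasDerivAt_id' p).mul_const q)
    have hf := (((hu.pow 2).mul_const (iteratedDeriv 2 Q q)).add
        ((((hasDerivAt_id' p).const_mul (6:ℝ)).mul hu).mul_const (iteratedDeriv 1 Q q))).add
        ((((hasDerivAt_id' p).pow 2).const_mul (12:ℝ)).mul_const (Q q))
    have hg := (((hu.pow 2).mul (hPd 2 p)).add
        ((hu.const_mul (6*q)).mul (hPd 1 p))).add
        ((hP0 p).const_mul (12*q^2))
    have hfg := hg.congr_of_eventuallyEq (Filter.Eventually.of_forall fun x => h x q)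
    have e := hfg.unique hf
    simp only [Nat.reduceAdd, Nat.reduceSub, Nat.cast_ofNat, pow_one, Pi.pow_apply] at e
    linear_combination -e
  -- Step 2: differentiate in p again
  have E1 : ∀ p q : ℝ,
      2*q^2*iteratedDeriv 2 Q q - 12*q*iteratedDeriv 1 Q q + 24*Q q =
      (1-p*q)^2*iteratedDeriv 4 P p + 2*q*(1-p*q)*iteratedDeriv 3 P p
        + 2*q^2*iteratedDeriv 2 P p := by
    intro p q
    have hu : HasDerivAt (fun x : ℝ => 1 - x*q) (0 - 1*q) p :=
      (hasDerivAt_const p 1).sub ((hasDerivAt_id' p).mul_const q)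
    have hf := ((((hasDerivAt_const p (6:ℝ)).sub
          ((hasDerivAt_id' p).const_mul (12*q))).mul_const (iteratedDeriv 1 Q q)).sub
        ((hu.const_mul (2*q)).mul_const (iteratedDeriv 2 Q q))).add
        (((hasDerivAt_id' p).const_mul (24:ℝ)).mul_const (Q q))
    have hg := (((hu.pow 2).mul (hPd 3 p)).add
        ((hu.const_mul (4*q)).mul (hPd 2 p))).add
        ((hPd 1 p).const_mul (6*q^2))
    have hfg := hg.congr_of_eventuallyEq (Filter.Eventually.of_forall fun x => E0 q x)
    have e := hfg.unique hf
    simp only [Nat.reduceAdd, Nat.reduceSub, Nat.cast_ofNat, pow_one, Pi.pow_apply] at e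
    linear_combination -e
  -- Step 3: differentiate in q
  have E2 : ∀ p q : ℝ,
      2*q^2*iteratedDeriv 3 Q q - 8*q*iteratedDeriv 2 Q q + 12*iteratedDeriv 1 Q q =
      4*q*iteratedDeriv 2 P p + (2 - 4*p*q)*iteratedDeriv 3 P p
        - 2*p*(1-p*q)*iteratedDeriv 4 P p := by
    intro p q
    have hv : HasDerivAt (fun x : ℝ => 1 - p*x) (0 - p*1) q :=
      (hasDerivAt_const q 1).sub ((hasDerivAt_id' q).const_mul p)
    have hf := (((((hasDerivAt_id' q).pow 2).const_mul (2:ℝ)).mul (hQd 2 q)).sub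
        (((hasDerivAt_id' q).const_mul (12:ℝ)).mul (hQd 1 q))).add
        ((hQ0 q).const_mul (24:ℝ))
    have hg := (((hv.pow 2).mul_const (iteratedDeriv 4 P p)).add
        ((((hasDerivAt_id' q).const_mul (2:ℝ)).mul hv).mul_const (iteratedDeriv 3 P p))).add
        ((((hasDerivAt_id' q).pow 2).const_mul (2:ℝ)).mul_const (iteratedDeriv 2 P p))
    have hfg := hg.congr_of_eventuallyEq (Filter.Eventually.of_forall fun x => E1 p x)
    have e := hfg.unique hf
    simp only [Nat.reduceAdd, Nat.reduceSub, Nat.cast_ofNat, pow_one, Pi.pow_apply] at e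
    linear_combination -e
  -- Step 4: differentiate in q again
  intro p q
  have hv : HasDerivAt (fun x : ℝ => 1 - p*x) (0 - p*1) q :=
    (hasDerivAt_const q 1).sub ((hasDerivAt_id' q).const_mul p)
  have hf := (((((hasDerivAt_id' q).pow 2).const_mul (2:ℝ)).mul (hQd 3 q)).sub
      (((hasDerivAt_id' q).const_mul (8:ℝ)).mul (hQd 2 q))).add
      ((hQd 1 q).const_mul (12:ℝ))
  have hg := ((((hasDerivAt_id' q).const_mul (4:ℝ)).mul_const (iteratedDeriv 2 P p)).add
      (((hasDerivAt_const q (2:ℝ)).sub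
        ((hasDerivAt_id' q).const_mul (4*p))).mul_const (iteratedDeriv 3 P p))).sub
      ((hv.const_mul (2*p)).mul_const (iteratedDeriv 4 P p))
  have hfg := hg.congr_of_eventuallyEq (Filter.Eventually.of_forall fun x => E2 p x)
  have e := hfg.unique hf
  simp only [Nat.reduceAdd, Nat.reduceSub, Nat.cast_ofNat, pow_one, Pi.pow_apply] at e
  linear_combination -e / 2
end

section
/- Suppose real polynomials P(p) = Σᵢ₌₀⁴ aᵢpⁱ and Q(q) = Σᵢ₌₀⁴ bᵢqⁱ satisfy (1-pq)²Q''(q) + 6p(1-pq)Q'(q) + 12p²Q(q) = (1-pq)²P''(p) + 6q(1-pq)P'(p) + 12q²P(p) for all real p, q. Then b₀ = a₄, b₁ = a₃, b₂ = a₂, b₃ = a₁, b₄ = a₀. Conversely, any such pair of polynomials with these coefficient relations satisfies the identity. -/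
/-! On the axis `p = 0` the identity reduces to `Q''(q) = P''(0) + 6 P'(0) q + 12 P(0) q²`, and on the
axis `q = 0` to `Q''(0) + 6 Q'(0) p + 12 Q(0) p² = P''(p)`; comparing coefficients of these two
quadratics gives the five relations. Conversely, under the relations both sides are the same
polynomial in `p` and `q`. -/

lemma hasDerivAt_quartic (c₀ c₁ c₂ c₃ c₄ x : ℝ) :
    HasDerivAt (fun x : ℝ => c₀ + c₁*x + c₂*x^2 + c₃*x^3 + c₄*x^4)
      (c₁ + 2*c₂*x + 3*c₃*x^2 + 4*c₄*x^3) x := by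
  refine (((((hasDerivAt_const x c₀).add ((hasDerivAt_id x).const_mul c₁)).add
      ((hasDerivAt_pow 2 x).const_mul c₂)).add ((hasDerivAt_pow 3 x).const_mul c₃)).add
      ((hasDerivAt_pow 4 x).const_mul c₄)).congr_deriv ?_
  norm_num
  ring

lemma deriv_quartic (c₀ c₁ c₂ c₃ c₄ : ℝ) :
    deriv (fun x : ℝ => c₀ + c₁*x + c₂*x^2 + c₃*x^3 + c₄*x^4) =
      fun x => c₁ + 2*c₂*x + 3*c₃*x^2 + 4*c₄*x^3 :=
  funext fun x => (hasDerivAt_quartic c₀ c₁ c₂ c₃ c₄ x).deriv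

lemma iteratedDeriv_two_quartic (c₀ c₁ c₂ c₃ c₄ : ℝ) :
    iteratedDeriv 2 (fun x : ℝ => c₀ + c₁*x + c₂*x^2 + c₃*x^3 + c₄*x^4) =
      fun x => 2*c₂ + 6*c₃*x + 12*c₄*x^2 := by
  have h := deriv_quartic c₁ (2*c₂) (3*c₃) (4*c₄) 0
  simp only [zero_mul, add_zero] at h
  rw [iteratedDeriv_succ, iteratedDeriv_one, deriv_quartic, h]
  ext x
  ring

lemma quadratic_coeffs_eq_zero {c₀ c₁ c₂ : ℝ} (h : ∀ x : ℝ, c₀ + c₁*x + c₂*x^2 = 0) :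
    c₀ = 0 ∧ c₁ = 0 ∧ c₂ = 0 := by
  have h₀ := h 0
  have h₁ := h 1
  have h₂ := h (-1)
  norm_num at h₀ h₁ h₂
  refine ⟨h₀, by linarith, by linarith⟩

theorem stmt_2 (a₀ a₁ a₂ a₃ a₄ b₀ b₁ b₂ b₃ b₄ : ℝ)
    (P : ℝ → ℝ) (Q : ℝ → ℝ)
    (hPdef : ∀ p, P p = a₀ + a₁*p + a₂*p^2 + a₃*p^3 + a₄*p^4)
    (hQdef : ∀ q, Q q = b₀ + b₁*q + b₂*q^2 + b₃*q^3 + b₄*q^4) :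
    (∀ p q : ℝ,
      (1 - p*q)^2 * iteratedDeriv 2 Q q + 6*p*(1 - p*q) * deriv Q q + 12*p^2 * Q q =
      (1 - p*q)^2 * iteratedDeriv 2 P p + 6*q*(1 - p*q) * deriv P p + 12*q^2 * P p)
    ↔ (b₀ = a₄ ∧ b₁ = a₃ ∧ b₂ = a₂ ∧ b₃ = a₁ ∧ b₄ = a₀) := by
  obtain rfl := funext hPdef
  obtain rfl := funext hQdef
  simp only [deriv_quartic, iteratedDeriv_two_quartic]
  constructor
  · intro h
    obtain ⟨h₂, h₃, h₄⟩ := quadratic_coeffs_eq_zero (c₀ := 2*b₂ - 2*a₂) (c₁ := 6*b₃ - 6*a₁)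
      (c₂ := 12*b₄ - 12*a₀) fun q => by linear_combination h 0 q
    obtain ⟨-, h₁, h₀⟩ := quadratic_coeffs_eq_zero (c₀ := 2*b₂ - 2*a₂) (c₁ := 6*b₁ - 6*a₃)
      (c₂ := 12*b₀ - 12*a₄) fun p => by linear_combination h p 0
    refine ⟨by linarith, by linarith, by linarith, by linarith, by linarith⟩
  · rintro ⟨rfl, rfl, rfl, rfl, rfl⟩ p q
    ring
end

section
/- Suppose smooth real functions X₁(x₁) and X₂(x₂) and a nonzero real constant ν satisfy (νx₁+x₂)²X₁''(x₁) - 6(νx₁+x₂)X₁'(x₁) + 12ν²X₁(x₁) = (νx₁+x₂)²X₂''(x₂) - 6(νx₁+x₂)X₂'(x₂) + 12X₂(x₂) for all real x₁, x₂. Then X₁''''(x₁) = ν²X₂''''(x₂) for all x₁, x₂, so both X₁ and X₂ are polynomials of degree at most 4. -/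
private lemma hDA {f : ℝ → ℝ} (hf : ContDiff ℝ (⊤ : ℕ∞) f) (n : ℕ) (x : ℝ) :
    HasDerivAt (iteratedDeriv n f) (iteratedDeriv (n+1) f x) x := by
  have h : ContDiff ℝ (⊤:ℕ∞) (deriv^[n] f) := ContDiff.iterate_deriv n (hf.of_le (by simp))
  rw [iteratedDeriv_succ, iteratedDeriv_eq_iterate]
  exact ((h.differentiable (by simp)) x).hasDerivAt

private lemma tmpl {u v w : ℝ → ℝ} {u' v' w' : ℝ} (a k x : ℝ)
    (hu : HasDerivAt u u' x) (hv : HasDerivAt v v' x) (hw : HasDerivAt w w' x) :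
    HasDerivAt (fun t => (a + k*t)^2 * u t + (a + k*t) * v t + w t)
      (2*k*(a+k*x)*u x + (a+k*x)^2*u' + k*v x + (a+k*x)*v' + w') x := by
  have hs : HasDerivAt (fun t : ℝ => a + k*t) k x := by
    simpa using ((hasDerivAt_id x).const_mul k).const_add a
  have hs2 : HasDerivAt (fun t : ℝ => (a + k*t)^2) (2*k*(a+k*x)) x := by
    have := hs.pow 2
    refine this.congr_deriv ?_
    push_cast; ring
  have := ((hs2.mul hu).add (hs.mul hv)).add hw
  refine this.congr_deriv ?_
  ring

private lemma hp4 (b0 b1 b2 b3 b4 : ℝ) (x : ℝ) :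
    HasDerivAt (fun x : ℝ => b0 + b1*x + b2*x^2 + b3*x^3 + b4*x^4)
      (b1 + 2*b2*x + 3*b3*x^2 + 4*b4*x^3) x := by
  have h1 : HasDerivAt (fun x : ℝ => x) 1 x := hasDerivAt_id x
  have := ((((hasDerivAt_const x b0).add (h1.const_mul b1)).add
      ((hasDerivAt_pow 2 x).const_mul b2)).add ((hasDerivAt_pow 3 x).const_mul b3)).add
      ((hasDerivAt_pow 4 x).const_mul b4)
  refine this.congr_deriv ?_
  push_cast; ring

private lemma step {g p : ℝ → ℝ} (hg : Differentiable ℝ g) (hp : Differentiable ℝ p)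
    (hd : ∀ y, deriv g y = deriv p y) (x : ℝ) : g x = p x - p 0 + g 0 := by
  have hgen : g x - p x = g 0 - p 0 :=
    is_const_of_deriv_eq_zero (hg.sub hp)
      (fun t => by rw [deriv_sub (hg t) (hp t), hd t, sub_self]) x 0
  linarith

private lemma poly4 {f : ℝ → ℝ} (hf : ContDiff ℝ (⊤ : ℕ∞) f) {c : ℝ}
    (hc : ∀ x, iteratedDeriv 4 f x = c) :
    ∃ a : Fin 5 → ℝ, ∀ x, f x = ∑ i : Fin 5, a i * x ^ (i : ℕ) := by
  have hpdiff : ∀ b0 b1 b2 b3 b4 : ℝ,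
      Differentiable ℝ (fun x : ℝ => b0 + b1*x + b2*x^2 + b3*x^3 + b4*x^4) :=
    fun b0 b1 b2 b3 b4 x => (hp4 b0 b1 b2 b3 b4 x).differentiableAt
  have hdiffn : ∀ n : ℕ, Differentiable ℝ (iteratedDeriv n f) :=
    fun n x => (hDA hf n x).differentiableAt
  set c3 := iteratedDeriv 3 f 0 with hc3
  set c2 := iteratedDeriv 2 f 0 with hc2
  set c1 := deriv f 0 with hc1
  set c0 := f 0 with hc0
  have s3 : ∀ x, iteratedDeriv 3 f x = c3 + c*x := by
    intro x
    have := step (g := iteratedDeriv 3 f)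
      (p := fun x : ℝ => 0 + c*x + 0*x^2 + 0*x^3 + 0*x^4) (hdiffn 3) (hpdiff _ _ _ _ _)
      (fun y => by rw [(hp4 0 c 0 0 0 y).deriv, ← iteratedDeriv_succ, hc y]; ring) x
    linear_combination this
  have s2 : ∀ x, iteratedDeriv 2 f x = c2 + c3*x + c/2*x^2 := by
    intro x
    have := step (g := iteratedDeriv 2 f)
      (p := fun x : ℝ => 0 + c3*x + (c/2)*x^2 + 0*x^3 + 0*x^4) (hdiffn 2) (hpdiff _ _ _ _ _)
      (fun y => by rw [(hp4 0 c3 (c/2) 0 0 y).deriv, ← iteratedDeriv_succ, s3 y]; ring) x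
    linear_combination this
  have hder1 : deriv f = iteratedDeriv 1 f := iteratedDeriv_one.symm
  have s1 : ∀ x, deriv f x = c1 + c2*x + c3/2*x^2 + c/6*x^3 := by
    intro x
    have := step (g := deriv f)
      (p := fun x : ℝ => 0 + c2*x + (c3/2)*x^2 + (c/6)*x^3 + 0*x^4)
      (by rw [hder1]; exact hdiffn 1) (hpdiff _ _ _ _ _)
      (fun y => by
        rw [(hp4 0 c2 (c3/2) (c/6) 0 y).deriv, hder1, ← iteratedDeriv_succ, s2 y]; ring) x
    linear_combination this
  have s0 : ∀ x, f x = c0 + c1*x + c2/2*x^2 + c3/6*x^3 + c/24*x^4 := by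
    intro x
    have := step (g := f)
      (p := fun x : ℝ => 0 + c1*x + (c2/2)*x^2 + (c3/6)*x^3 + (c/24)*x^4)
      (hf.differentiable (by simp)) (hpdiff _ _ _ _ _)
      (fun y => by rw [(hp4 0 c1 (c2/2) (c3/6) (c/24) y).deriv, s1 y]; ring) x
    linear_combination this
  refine ⟨![c0, c1, c2/2, c3/6, c/24], fun x => ?_⟩
  rw [s0 x, Fin.sum_univ_five]
  norm_num [Matrix.cons_val_zero, Matrix.cons_val_one, Matrix.head_cons]
  rfl

theorem stmt_5 (X₁ X₂ : ℝ → ℝ) (ν : ℝ) (hν : ν ≠ 0)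
    (hX₁ : ContDiff ℝ (⊤ : ℕ∞) X₁) (hX₂ : ContDiff ℝ (⊤ : ℕ∞) X₂)
    (h : ∀ x₁ x₂ : ℝ,
      (ν*x₁ + x₂)^2 * iteratedDeriv 2 X₁ x₁ - 6*(ν*x₁ + x₂) * deriv X₁ x₁ + 12*ν^2 * X₁ x₁ =
      (ν*x₁ + x₂)^2 * iteratedDeriv 2 X₂ x₂ - 6*(ν*x₁ + x₂) * deriv X₂ x₂ + 12 * X₂ x₂) :
    (∀ x₁ x₂ : ℝ, iteratedDeriv 4 X₁ x₁ = ν^2 * iteratedDeriv 4 X₂ x₂) ∧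
    (∃ a : Fin 5 → ℝ, ∀ x, X₁ x = ∑ i : Fin 5, a i * x ^ (i : ℕ)) ∧
    (∃ b : Fin 5 → ℝ, ∀ x, X₂ x = ∑ i : Fin 5, b i * x ^ (i : ℕ)) := by
  have hder1₂ : deriv X₂ = iteratedDeriv 1 X₂ := iteratedDeriv_one.symm
  have hder1₁ : deriv X₁ = iteratedDeriv 1 X₁ := iteratedDeriv_one.symm
  have hdX₂ : ∀ x, HasDerivAt (deriv X₂) (iteratedDeriv 2 X₂ x) x := by
    intro x; rw [hder1₂]; exact hDA hX₂ 1 x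
  have hX₂' : ∀ x, HasDerivAt X₂ (deriv X₂ x) x := by
    intro x
    simpa [iteratedDeriv_zero, iteratedDeriv_one] using hDA hX₂ 0 x
  -- First x₂-derivative of the identity
  have A1 : ∀ x₁ x : ℝ,
      (ν*x₁+x)^2 * iteratedDeriv 3 X₂ x - 4*(ν*x₁+x)*iteratedDeriv 2 X₂ x + 6*deriv X₂ x
        - 2*(ν*x₁+x)*iteratedDeriv 2 X₁ x₁ + 6*deriv X₁ x₁ = 0 := by
    intro x₁ x
    have hu : HasDerivAt (fun t => iteratedDeriv 2 X₂ t - iteratedDeriv 2 X₁ x₁)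
        (iteratedDeriv 3 X₂ x) x := (hDA hX₂ 2 x).sub_const _
    have hv : HasDerivAt (fun t => 6*deriv X₁ x₁ - 6*deriv X₂ t)
        (-(6*iteratedDeriv 2 X₂ x)) x := by
      simpa [Pi.sub_def] using (hasDerivAt_const x (6*deriv X₁ x₁)).sub ((hdX₂ x).const_mul 6)
    have hw : HasDerivAt (fun t => 12*X₂ t - 12*ν^2*X₁ x₁) (12*deriv X₂ x) x := by
      simpa using ((hX₂' x).const_mul 12).sub_const (12*ν^2*X₁ x₁)
    have hd := tmpl (ν*x₁) 1 x hu hv hw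
    have h0 : HasDerivAt (fun t => (ν*x₁ + 1*t)^2 *
          (iteratedDeriv 2 X₂ t - iteratedDeriv 2 X₁ x₁) +
          (ν*x₁ + 1*t) * (6*deriv X₁ x₁ - 6*deriv X₂ t) + (12*X₂ t - 12*ν^2*X₁ x₁)) 0 x := by
      have hfun : (fun t => (ν*x₁ + 1*t)^2 *
          (iteratedDeriv 2 X₂ t - iteratedDeriv 2 X₁ x₁) +
          (ν*x₁ + 1*t) * (6*deriv X₁ x₁ - 6*deriv X₂ t) + (12*X₂ t - 12*ν^2*X₁ x₁)) =
          fun _ => (0:ℝ) := funext fun t => by linear_combination -(h x₁ t)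
      rw [hfun]; exact hasDerivAt_const _ _
    have hz := hd.unique h0
    linear_combination hz
  -- Second x₂-derivative
  have A2 : ∀ x₁ x : ℝ,
      (ν*x₁+x)^2 * iteratedDeriv 4 X₂ x - 2*(ν*x₁+x)*iteratedDeriv 3 X₂ x
        + 2*iteratedDeriv 2 X₂ x - 2*iteratedDeriv 2 X₁ x₁ = 0 := by
    intro x₁ x
    have hu : HasDerivAt (fun t => iteratedDeriv 3 X₂ t) (iteratedDeriv 4 X₂ x) x :=
      hDA hX₂ 3 x
    have hv : HasDerivAt (fun t => -4*iteratedDeriv 2 X₂ t - 2*iteratedDeriv 2 X₁ x₁)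
        (-4*iteratedDeriv 3 X₂ x) x := ((hDA hX₂ 2 x).const_mul (-4)).sub_const _
    have hw : HasDerivAt (fun t => 6*deriv X₂ t + 6*deriv X₁ x₁)
        (6*iteratedDeriv 2 X₂ x) x := ((hdX₂ x).const_mul 6).add_const _
    have hd := tmpl (ν*x₁) 1 x hu hv hw
    have h0 : HasDerivAt (fun t => (ν*x₁ + 1*t)^2 * iteratedDeriv 3 X₂ t +
          (ν*x₁ + 1*t) * (-4*iteratedDeriv 2 X₂ t - 2*iteratedDeriv 2 X₁ x₁) +
          (6*deriv X₂ t + 6*deriv X₁ x₁)) 0 x := by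
      have hfun : (fun t => (ν*x₁ + 1*t)^2 * iteratedDeriv 3 X₂ t +
          (ν*x₁ + 1*t) * (-4*iteratedDeriv 2 X₂ t - 2*iteratedDeriv 2 X₁ x₁) +
          (6*deriv X₂ t + 6*deriv X₁ x₁)) = fun _ => (0:ℝ) :=
        funext fun t => by linear_combination A1 x₁ t
      rw [hfun]; exact hasDerivAt_const _ _
    have hz := hd.unique h0
    linear_combination hz
  -- Third x₂-derivative
  have A3 : ∀ x₁ x : ℝ, (ν*x₁+x)^2 * iteratedDeriv 5 X₂ x = 0 := by
    intro x₁ x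
    have hu : HasDerivAt (fun t => iteratedDeriv 4 X₂ t) (iteratedDeriv 5 X₂ x) x :=
      hDA hX₂ 4 x
    have hv : HasDerivAt (fun t => -2*iteratedDeriv 3 X₂ t) (-2*iteratedDeriv 4 X₂ x) x :=
      (hDA hX₂ 3 x).const_mul (-2)
    have hw : HasDerivAt (fun t => 2*iteratedDeriv 2 X₂ t - 2*iteratedDeriv 2 X₁ x₁)
        (2*iteratedDeriv 3 X₂ x) x := ((hDA hX₂ 2 x).const_mul 2).sub_const _
    have hd := tmpl (ν*x₁) 1 x hu hv hw
    have h0 : HasDerivAt (fun t => (ν*x₁ + 1*t)^2 * iteratedDeriv 4 X₂ t +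
          (ν*x₁ + 1*t) * (-2*iteratedDeriv 3 X₂ t) +
          (2*iteratedDeriv 2 X₂ t - 2*iteratedDeriv 2 X₁ x₁)) 0 x := by
      have hfun : (fun t => (ν*x₁ + 1*t)^2 * iteratedDeriv 4 X₂ t +
          (ν*x₁ + 1*t) * (-2*iteratedDeriv 3 X₂ t) +
          (2*iteratedDeriv 2 X₂ t - 2*iteratedDeriv 2 X₁ x₁)) = fun _ => (0:ℝ) :=
        funext fun t => by linear_combination A2 x₁ t
      rw [hfun]; exact hasDerivAt_const _ _
    have hz := hd.unique h0
    linear_combination hz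
  have F5 : ∀ x : ℝ, iteratedDeriv 5 X₂ x = 0 := by
    intro x
    have := A3 ((1-x)/ν) x
    have hs : ν*((1-x)/ν)+x = 1 := by field_simp; ring
    rw [hs] at this
    linarith
  -- First x₁-derivative of A2
  have B1 : ∀ x₂ x : ℝ,
      ν*(ν*x+x₂)*iteratedDeriv 4 X₂ x₂ - ν*iteratedDeriv 3 X₂ x₂
        - iteratedDeriv 3 X₁ x = 0 := by
    intro x₂ x
    have hu : HasDerivAt (fun _ : ℝ => iteratedDeriv 4 X₂ x₂) 0 x := hasDerivAt_const _ _
    have hv : HasDerivAt (fun _ : ℝ => -2*iteratedDeriv 3 X₂ x₂) 0 x := hasDerivAt_const _ _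
    have hw : HasDerivAt (fun t => 2*iteratedDeriv 2 X₂ x₂ - 2*iteratedDeriv 2 X₁ t)
        (-(2*iteratedDeriv 3 X₁ x)) x := by
      simpa [Pi.sub_def] using (hasDerivAt_const x (2*iteratedDeriv 2 X₂ x₂)).sub
        ((hDA hX₁ 2 x).const_mul 2)
    have hd := tmpl x₂ ν x hu hv hw
    have h0 : HasDerivAt (fun t => (x₂ + ν*t)^2 * iteratedDeriv 4 X₂ x₂ +
          (x₂ + ν*t) * (-2*iteratedDeriv 3 X₂ x₂) +
          (2*iteratedDeriv 2 X₂ x₂ - 2*iteratedDeriv 2 X₁ t)) 0 x := by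
      have hfun : (fun t => (x₂ + ν*t)^2 * iteratedDeriv 4 X₂ x₂ +
          (x₂ + ν*t) * (-2*iteratedDeriv 3 X₂ x₂) +
          (2*iteratedDeriv 2 X₂ x₂ - 2*iteratedDeriv 2 X₁ t)) = fun _ => (0:ℝ) :=
        funext fun t => by linear_combination A2 t x₂
      rw [hfun]; exact hasDerivAt_const _ _
    have hz := hd.unique h0
    linear_combination hz / 2
  -- Second x₁-derivative
  have B2 : ∀ x₁ x₂ : ℝ, iteratedDeriv 4 X₁ x₁ = ν^2 * iteratedDeriv 4 X₂ x₂ := by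
    intro x₁ x₂
    have hu : HasDerivAt (fun _ : ℝ => (0:ℝ)) 0 x₁ := hasDerivAt_const _ _
    have hv : HasDerivAt (fun _ : ℝ => ν*iteratedDeriv 4 X₂ x₂) 0 x₁ := hasDerivAt_const _ _
    have hw : HasDerivAt (fun t => -(ν*iteratedDeriv 3 X₂ x₂) - iteratedDeriv 3 X₁ t)
        (-iteratedDeriv 4 X₁ x₁) x₁ := by
      simpa [Pi.sub_def] using (hasDerivAt_const x₁ (-(ν*iteratedDeriv 3 X₂ x₂))).sub (hDA hX₁ 3 x₁)
    have hd := tmpl x₂ ν x₁ hu hv hw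
    have h0 : HasDerivAt (fun t => (x₂ + ν*t)^2 * 0 +
          (x₂ + ν*t) * (ν*iteratedDeriv 4 X₂ x₂) +
          (-(ν*iteratedDeriv 3 X₂ x₂) - iteratedDeriv 3 X₁ t)) 0 x₁ := by
      have hfun : (fun t => (x₂ + ν*t)^2 * 0 +
          (x₂ + ν*t) * (ν*iteratedDeriv 4 X₂ x₂) +
          (-(ν*iteratedDeriv 3 X₂ x₂) - iteratedDeriv 3 X₁ t)) = fun _ => (0:ℝ) :=
        funext fun t => by linear_combination B1 x₂ t
      rw [hfun]; exact hasDerivAt_const _ _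
    have hz := hd.unique h0
    linear_combination -hz
  refine ⟨B2, ?_, ?_⟩
  · exact poly4 hX₁ (c := ν^2 * iteratedDeriv 4 X₂ 0) (fun x => B2 x 0)
  · refine poly4 hX₂ (c := iteratedDeriv 4 X₂ 0) (fun x => ?_)
    have h1 := B2 0 x
    have h2 := B2 0 0
    have hν2 : ν^2 ≠ 0 := pow_ne_zero _ hν
    have : ν^2 * iteratedDeriv 4 X₂ x = ν^2 * iteratedDeriv 4 X₂ 0 := by rw [← h1, h2]
    exact mul_left_cancel₀ hν2 this
end

section
/- Suppose smooth real functions X₁(x₁), X₂(x₂) satisfy (x₁-x₂)²X₂''(x₂) + 6(x₁-x₂)X₂'(x₂) + 12X₂(x₂) = (x₁-x₂)²X₁''(x₁) - 6(x₁-x₂)X₁'(x₁) + 12X₁(x₁) for all real x₁, x₂. Then X₁ and X₂ are polynomials of degree at most 4 with identical coefficients, i.e. X₁ = X₂ as polynomial functions. -/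
open scoped ContDiff

private lemma poly_step (f : ℝ → ℝ) (hf : Differentiable ℝ f) (c0 c1 c2 c3 : ℝ)
    (h : ∀ x, deriv f x = c0 + c1*x + c2*x^2 + c3*x^3) :
    ∀ x, f x = f 0 + c0*x + c1/2*x^2 + c2/3*x^3 + c3/4*x^4 := by
  have hg : ∀ y : ℝ, HasDerivAt
      (fun y => f y - (c0*y + c1/2*y^2 + c2/3*y^3 + c3/4*y^4)) 0 y := by
    intro y
    have hfy : HasDerivAt f (c0 + c1*y + c2*y^2 + c3*y^3) y := by
      have := (hf y).hasDerivAt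
      rwa [h y] at this
    have hpy : HasDerivAt (fun y : ℝ => c0*y + c1/2*y^2 + c2/3*y^3 + c3/4*y^4)
        (c0*1 + c1/2*(↑2*y^(2-1)) + c2/3*(↑3*y^(3-1)) + c3/4*(↑4*y^(4-1))) y :=
      ((((hasDerivAt_id' y).const_mul c0).add
        ((hasDerivAt_pow 2 y).const_mul (c1/2))).add
        ((hasDerivAt_pow 3 y).const_mul (c2/3))).add
        ((hasDerivAt_pow 4 y).const_mul (c3/4))
    have key : (c0 + c1*y + c2*y^2 + c3*y^3) -
        (c0*1 + c1/2*(↑2*y^(2-1)) + c2/3*(↑3*y^(3-1)) + c3/4*(↑4*y^(4-1))) = 0 := by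
      push_cast; ring
    exact key ▸ (hfy.sub hpy)
  intro x
  have hconst := is_const_of_deriv_eq_zero
    (f := fun y => f y - (c0*y + c1/2*y^2 + c2/3*y^3 + c3/4*y^4))
    (fun y => (hg y).differentiableAt) (fun y => (hg y).deriv) x 0
  nlinarith [hconst]

theorem stmt_7 (X₁ X₂ : ℝ → ℝ) (hX₁ : ContDiff ℝ (⊤ : ℕ∞) X₁) (hX₂ : ContDiff ℝ (⊤ : ℕ∞) X₂)
    (h : ∀ x₁ x₂ : ℝ,
      (x₁ - x₂)^2 * iteratedDeriv 2 X₂ x₂ + 6*(x₁ - x₂) * deriv X₂ x₂ + 12 * X₂ x₂ =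
      (x₁ - x₂)^2 * iteratedDeriv 2 X₁ x₁ - 6*(x₁ - x₂) * deriv X₁ x₁ + 12 * X₁ x₁) :
    ∃ a : Fin 5 → ℝ,
      (∀ x, X₁ x = ∑ i : Fin 5, a i * x ^ (i : ℕ)) ∧
      (∀ x, X₂ x = ∑ i : Fin 5, a i * x ^ (i : ℕ)) := by
  have hX2eq : X₂ = X₁ := by
    funext x
    have := h x x
    simp at this
    linarith
  rw [hX2eq] at h
  -- basic facts about iterated derivatives of X₁
  have hDc : ∀ n, ContDiff ℝ ∞ (deriv^[n] X₁) := fun n => (hX₁.of_le (by simp)).iterate_deriv n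
  have hdiff : ∀ n, Differentiable ℝ (deriv^[n] X₁) :=
    fun n => (hDc n).differentiable (by simp)
  have hstep : ∀ n, deriv (deriv^[n] X₁) = deriv^[n+1] X₁ :=
    fun n => (Function.iterate_succ_apply' deriv n X₁).symm
  have hhd : ∀ n x, HasDerivAt (deriv^[n] X₁) (deriv^[n+1] X₁ x) x := fun n x => by
    have := ((hdiff n) x).hasDerivAt
    rwa [hstep n] at this
  have h2it : iteratedDeriv 2 X₁ = deriv^[2] X₁ := iteratedDeriv_eq_iterate
  have h1it : deriv X₁ = deriv^[1] X₁ := rfl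
  have h0it : X₁ = deriv^[0] X₁ := rfl
  -- the ODE from x₂ = 0
  have E0 : ∀ x : ℝ, x^2 * deriv^[2] X₁ x - 6*x*deriv^[1] X₁ x + 12 * deriv^[0] X₁ x =
      (deriv^[2] X₁ 0) * x^2 + (6 * deriv^[1] X₁ 0) * x + 12 * deriv^[0] X₁ 0 := by
    intro x
    have hx := h x 0
    rw [h2it, h1it] at hx
    simp only [sub_zero] at hx
    have h0 : deriv^[0] X₁ = X₁ := rfl
    rw [h0]
    linarith
  -- first differentiation
  have E1 : ∀ x : ℝ, x^2 * deriv^[3] X₁ x - 4*x*deriv^[2] X₁ x + 6 * deriv^[1] X₁ x =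
      (2 * deriv^[2] X₁ 0) * x + 6 * deriv^[1] X₁ 0 := by
    intro x
    have hL : HasDerivAt (fun y => y^2 * deriv^[2] X₁ y - 6*y*deriv^[1] X₁ y + 12 * deriv^[0] X₁ y)
        ((↑2*x^(2-1) * deriv^[2] X₁ x + x^2 * deriv^[3] X₁ x)
          - ((6*1) * deriv^[1] X₁ x + 6*x * deriv^[2] X₁ x) + 12 * deriv^[1] X₁ x) x :=
      (((hasDerivAt_pow 2 x).mul (hhd 2 x)).sub
        (((hasDerivAt_id' x).const_mul 6).mul (hhd 1 x))).add ((hhd 0 x).const_mul 12)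
    have hR : HasDerivAt (fun y : ℝ => (deriv^[2] X₁ 0) * y^2 + (6 * deriv^[1] X₁ 0) * y
        + 12 * deriv^[0] X₁ 0)
        ((deriv^[2] X₁ 0) * (↑2*x^(2-1)) + (6 * deriv^[1] X₁ 0) * 1 + 0) x :=
      (((hasDerivAt_pow 2 x).const_mul (deriv^[2] X₁ 0)).add
        ((hasDerivAt_id' x).const_mul (6 * deriv^[1] X₁ 0))).add (hasDerivAt_const x _)
    have hfun : (fun y => y^2 * deriv^[2] X₁ y - 6*y*deriv^[1] X₁ y + 12 * deriv^[0] X₁ y)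
        = (fun y : ℝ => (deriv^[2] X₁ 0) * y^2 + (6 * deriv^[1] X₁ 0) * y + 12 * deriv^[0] X₁ 0) :=
      funext E0
    have huniq := (hfun ▸ hL).unique hR
    push_cast at huniq
    linear_combination huniq
  -- second differentiation
  have E2 : ∀ x : ℝ, x^2 * deriv^[4] X₁ x - 2*x*deriv^[3] X₁ x + 2 * deriv^[2] X₁ x =
      2 * deriv^[2] X₁ 0 := by
    intro x
    have hL : HasDerivAt (fun y => y^2 * deriv^[3] X₁ y - 4*y*deriv^[2] X₁ y + 6 * deriv^[1] X₁ y)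
        ((↑2*x^(2-1) * deriv^[3] X₁ x + x^2 * deriv^[4] X₁ x)
          - ((4*1) * deriv^[2] X₁ x + 4*x * deriv^[3] X₁ x) + 6 * deriv^[2] X₁ x) x :=
      (((hasDerivAt_pow 2 x).mul (hhd 3 x)).sub
        (((hasDerivAt_id' x).const_mul 4).mul (hhd 2 x))).add ((hhd 1 x).const_mul 6)
    have hR : HasDerivAt (fun y : ℝ => (2 * deriv^[2] X₁ 0) * y + 6 * deriv^[1] X₁ 0)
        ((2 * deriv^[2] X₁ 0) * 1 + 0) x :=
      ((hasDerivAt_id' x).const_mul (2 * deriv^[2] X₁ 0)).add (hasDerivAt_const x _)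
    have hfun : (fun y => y^2 * deriv^[3] X₁ y - 4*y*deriv^[2] X₁ y + 6 * deriv^[1] X₁ y)
        = (fun y : ℝ => (2 * deriv^[2] X₁ 0) * y + 6 * deriv^[1] X₁ 0) := funext E1
    have huniq := (hfun ▸ hL).unique hR
    push_cast at huniq
    linear_combination huniq
  -- third differentiation
  have E3 : ∀ x : ℝ, x^2 * deriv^[5] X₁ x = 0 := by
    intro x
    have hL : HasDerivAt (fun y => y^2 * deriv^[4] X₁ y - 2*y*deriv^[3] X₁ y + 2 * deriv^[2] X₁ y)
        ((↑2*x^(2-1) * deriv^[4] X₁ x + x^2 * deriv^[5] X₁ x)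
          - ((2*1) * deriv^[3] X₁ x + 2*x * deriv^[4] X₁ x) + 2 * deriv^[3] X₁ x) x :=
      (((hasDerivAt_pow 2 x).mul (hhd 4 x)).sub
        (((hasDerivAt_id' x).const_mul 2).mul (hhd 3 x))).add ((hhd 2 x).const_mul 2)
    have hR : HasDerivAt (fun _ : ℝ => 2 * deriv^[2] X₁ 0) 0 x := hasDerivAt_const x _
    have hfun : (fun y => y^2 * deriv^[4] X₁ y - 2*y*deriv^[3] X₁ y + 2 * deriv^[2] X₁ y)
        = (fun _ : ℝ => 2 * deriv^[2] X₁ 0) := funext E2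
    have huniq := (hfun ▸ hL).unique hR
    push_cast at huniq
    linear_combination huniq
  -- fifth derivative vanishes everywhere
  have hD5 : ∀ x : ℝ, deriv^[5] X₁ x = 0 := by
    have hc : Continuous (deriv^[5] X₁) := (hDc 5).continuous
    have heq : Set.EqOn (deriv^[5] X₁) (fun _ => 0) ({(0:ℝ)}ᶜ) := by
      intro x hx
      have hx0 : (x:ℝ) ≠ 0 := hx
      have := E3 x
      have hx2 : x^2 ≠ 0 := pow_ne_zero 2 hx0
      exact (mul_eq_zero.mp this).resolve_left hx2
    have := Continuous.ext_on (dense_compl_singleton (0:ℝ)) hc continuous_const heq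
    intro x
    exact congrFun this x
  -- integrate back up
  have d4 : ∀ x : ℝ, deriv^[4] X₁ x = deriv^[4] X₁ 0 := by
    have t := poly_step (deriv^[4] X₁) (hdiff 4) 0 0 0 0
      (fun x => by rw [hstep 4, hD5 x]; ring)
    intro x; linear_combination t x
  have d3 : ∀ x : ℝ, deriv^[3] X₁ x = deriv^[3] X₁ 0 + deriv^[4] X₁ 0 * x := by
    have t := poly_step (deriv^[3] X₁) (hdiff 3) (deriv^[4] X₁ 0) 0 0 0
      (fun x => by rw [hstep 3, d4 x]; ring)
    intro x; linear_combination t x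
  have d2 : ∀ x : ℝ, deriv^[2] X₁ x = deriv^[2] X₁ 0 + deriv^[3] X₁ 0 * x
      + deriv^[4] X₁ 0 / 2 * x^2 := by
    have t := poly_step (deriv^[2] X₁) (hdiff 2) (deriv^[3] X₁ 0) (deriv^[4] X₁ 0) 0 0
      (fun x => by rw [hstep 2, d3 x]; ring)
    intro x; linear_combination t x
  have d1 : ∀ x : ℝ, deriv^[1] X₁ x = deriv^[1] X₁ 0 + deriv^[2] X₁ 0 * x
      + deriv^[3] X₁ 0 / 2 * x^2 + deriv^[4] X₁ 0 / 6 * x^3 := by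
    have t := poly_step (deriv^[1] X₁) (hdiff 1) (deriv^[2] X₁ 0) (deriv^[3] X₁ 0)
      (deriv^[4] X₁ 0 / 2) 0 (fun x => by rw [hstep 1, d2 x]; ring)
    intro x; linear_combination t x
  have d0 : ∀ x : ℝ, X₁ x = X₁ 0 + deriv^[1] X₁ 0 * x + deriv^[2] X₁ 0 / 2 * x^2
      + deriv^[3] X₁ 0 / 6 * x^3 + deriv^[4] X₁ 0 / 24 * x^4 := by
    have t := poly_step (deriv^[0] X₁) (hdiff 0) (deriv^[1] X₁ 0) (deriv^[2] X₁ 0)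
      (deriv^[3] X₁ 0 / 2) (deriv^[4] X₁ 0 / 6) (fun x => by rw [hstep 0, d1 x])
    intro x
    have tx := t x
    simp only [Function.iterate_zero, id_eq] at tx
    linear_combination tx
  refine ⟨![X₁ 0, deriv^[1] X₁ 0, deriv^[2] X₁ 0 / 2, deriv^[3] X₁ 0 / 6, deriv^[4] X₁ 0 / 24],
    ?_, ?_⟩ <;>
  · intro x
    first
    | rw [hX2eq, d0 x, Fin.sum_univ_five]
    | rw [d0 x, Fin.sum_univ_five]
    simp only [Matrix.cons_val_zero, Matrix.cons_val_one, Matrix.head_cons,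
      Matrix.cons_val_two, Matrix.tail_cons, Matrix.cons_val_three, Matrix.cons_val_four,
      Fin.isValue, Fin.val_zero, Fin.val_one, Fin.val_two,
      (show ((3:Fin 5):ℕ) = 3 from rfl), (show ((4:Fin 5):ℕ) = 4 from rfl)]
    ring
end

section
/- Let f(r) be a C² function on an interval with r > 0. The quantity (2 - r²·(d/dr)[r²·(d/dr)(f/r²)])/(12r²) vanishes identically if and only if f(r) = 1 + b₁r + b₂r² for some constants b₁, b₂. -/
/-!
Write `F = r² (f / r²)'`. The vanishing condition says `F' = 2 / r²`, so `F = -2 / r + c₁`;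
then `(f / r²)' = (-2 / r + c₁) / r²`, which integrates to `f / r² = (1 - c₁ r) / r² + c₂`.
Conversely, for `f = 1 + b₁ r + b₂ r²` one computes `F = -2 / r - b₁` directly.
-/

open Set

theorem IsOpen.exists_eqOn_add_of_hasDerivAt {𝕜 G : Type*} [RCLike 𝕜] [NormedAddCommGroup G]
    [NormedSpace 𝕜 G] {s : Set 𝕜} {f g f' : 𝕜 → G} (hs : IsOpen s) (hs' : IsPreconnected s)
    (hf : ∀ x ∈ s, HasDerivAt f (f' x) x) (hg : ∀ x ∈ s, HasDerivAt g (f' x) x) :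
    ∃ c, s.EqOn f (g · + c) :=
  hs.exists_eq_add_of_deriv_eq hs'
    (fun x hx => (hf x hx).differentiableAt.differentiableWithinAt)
    (fun x hx => (hg x hx).differentiableAt.differentiableWithinAt)
    (fun x hx => (hf x hx).deriv.trans (hg x hx).deriv.symm)

theorem hasDerivAt_neg_two_div {x : ℝ} (hx : x ≠ 0) :
    HasDerivAt (fun t => -2 / t) (2 / x ^ 2) x := by
  refine ((hasDerivAt_const x (-2 : ℝ)).div (hasDerivAt_id' x) hx).congr_deriv ?_
  field_simp
  ring

theorem hasDerivAt_one_add_mul_div_sq (b₁ : ℝ) {x : ℝ} (hx : x ≠ 0) :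
    HasDerivAt (fun t => (1 + b₁ * t) / t ^ 2) ((-2 / x - b₁) / x ^ 2) x := by
  refine (((hasDerivAt_id' x).const_mul b₁ |>.const_add 1).div (hasDerivAt_pow 2 x)
    (pow_ne_zero 2 hx)).congr_deriv ?_
  field_simp
  ring

noncomputable def radialFlux (f : ℝ → ℝ) (r : ℝ) : ℝ :=
  r ^ 2 * deriv (fun s => f s / s ^ 2) r

section

variable {s : Set ℝ} {f : ℝ → ℝ}

theorem radialFlux_eq_of_eqOn (hs : IsOpen s) (hs0 : (0 : ℝ) ∉ s) {b₁ b₂ : ℝ}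
    (hf : ∀ r ∈ s, f r = 1 + b₁ * r + b₂ * r ^ 2) {r : ℝ} (hr : r ∈ s) :
    radialFlux f r = -2 / r - b₁ := by
  have hr0 : r ≠ 0 := ne_of_mem_of_not_mem hr hs0
  have hquot : (fun t => f t / t ^ 2) =ᶠ[nhds r] fun t => (1 + b₁ * t) / t ^ 2 + b₂ := by
    filter_upwards [hs.mem_nhds hr] with t ht
    have ht0 : t ≠ 0 := ne_of_mem_of_not_mem ht hs0
    rw [hf t ht]
    field_simp
  rw [radialFlux, hquot.deriv_eq, ((hasDerivAt_one_add_mul_div_sq b₁ hr0).add_const b₂).deriv]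
  field_simp

theorem deriv_radialFlux_of_eqOn (hs : IsOpen s) (hs0 : (0 : ℝ) ∉ s) {b₁ b₂ : ℝ}
    (hf : ∀ r ∈ s, f r = 1 + b₁ * r + b₂ * r ^ 2) {r : ℝ} (hr : r ∈ s) :
    deriv (radialFlux f) r = 2 / r ^ 2 := by
  have hflux : radialFlux f =ᶠ[nhds r] fun t => -2 / t - b₁ :=
    Filter.eventually_of_mem (hs.mem_nhds hr) fun t ht => radialFlux_eq_of_eqOn hs hs0 hf ht
  rw [hflux.deriv_eq]
  exact ((hasDerivAt_neg_two_div (ne_of_mem_of_not_mem hr hs0)).sub_const b₁).deriv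

theorem exists_eqOn_of_deriv_radialFlux (hs : IsOpen s) (hs' : IsPreconnected s)
    (hs0 : (0 : ℝ) ∉ s) (hf : DifferentiableOn ℝ f s)
    (H : ∀ r ∈ s, deriv (radialFlux f) r = 2 / r ^ 2) :
    ∃ b₁ b₂ : ℝ, ∀ r ∈ s, f r = 1 + b₁ * r + b₂ * r ^ 2 := by
  have hne : ∀ r ∈ s, r ≠ 0 := fun r hr => ne_of_mem_of_not_mem hr hs0
  obtain ⟨c₁, hc₁⟩ : ∃ c₁, s.EqOn (radialFlux f) (fun t => -2 / t + c₁) := by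
    refine hs.exists_eqOn_add_of_hasDerivAt hs' (fun r hr => ?_)
      (fun r hr => hasDerivAt_neg_two_div (hne r hr))
    -- `F' = 2 / r² ≠ 0` already forces `F` to be differentiable at `r`.
    have hF' := H r hr
    rw [← hF']
    exact (differentiableAt_of_deriv_ne_zero
      (hF' ▸ div_ne_zero two_ne_zero (pow_ne_zero 2 (hne r hr)))).hasDerivAt
  obtain ⟨c₂, hc₂⟩ :
      ∃ c₂, s.EqOn (fun t => f t / t ^ 2) (fun t => (1 + -c₁ * t) / t ^ 2 + c₂) := by
    refine hs.exists_eqOn_add_of_hasDerivAt hs' (fun r hr => ?_)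
      (fun r hr => hasDerivAt_one_add_mul_div_sq (-c₁) (hne r hr))
    have hr0 := hne r hr
    have hquot : HasDerivAt (fun t => f t / t ^ 2) (deriv (fun t => f t / t ^ 2) r) r :=
      ((hf.differentiableAt (hs.mem_nhds hr)).div (differentiableAt_pow 2)
        (pow_ne_zero 2 hr0)).hasDerivAt
    have hflux : r ^ 2 * deriv (fun t => f t / t ^ 2) r = -2 / r + c₁ := hc₁ hr
    refine hquot.congr_deriv ?_
    field_simp at hflux ⊢
    linear_combination hflux
  refine ⟨-c₁, c₂, fun r hr => ?_⟩
  have hquot : f r / r ^ 2 = (1 + -c₁ * r) / r ^ 2 + c₂ := hc₂ hr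
  have hr0 := hne r hr
  field_simp at hquot
  linear_combination hquot

theorem deriv_radialFlux_eq_iff (hs : IsOpen s) (hs' : IsPreconnected s) (hs0 : (0 : ℝ) ∉ s)
    (hf : DifferentiableOn ℝ f s) :
    (∀ r ∈ s, deriv (radialFlux f) r = 2 / r ^ 2) ↔
      ∃ b₁ b₂ : ℝ, ∀ r ∈ s, f r = 1 + b₁ * r + b₂ * r ^ 2 :=
  ⟨exists_eqOn_of_deriv_radialFlux hs hs' hs0 hf,
    fun ⟨_, _, hb⟩ _ hr => deriv_radialFlux_of_eqOn hs hs0 hb hr⟩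

end

theorem two_sub_sq_mul_div_eq_zero_iff {r D : ℝ} (hr : r ≠ 0) :
    (2 - r ^ 2 * D) / (12 * r ^ 2) = 0 ↔ D = 2 / r ^ 2 := by
  rw [div_eq_zero_iff, eq_div_iff (pow_ne_zero 2 hr)]
  constructor
  · rintro (h | h)
    · linarith
    · exact absurd h (by positivity)
  · intro h
    left
    linarith

theorem stmt_10_general (a b : ℝ) (ha : 0 ≤ a) (f : ℝ → ℝ)
    (hf : ContDiffOn ℝ 2 f (Set.Ioo a b)) :
    (∀ r ∈ Set.Ioo a b,
      (2 - r^2 * deriv (fun r' => r'^2 * deriv (fun s => f s / s^2) r') r) / (12 * r^2) = 0)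
    ↔ ∃ b₁ b₂ : ℝ, ∀ r ∈ Set.Ioo a b, f r = 1 + b₁*r + b₂*r^2 := by
  have hs0 : (0 : ℝ) ∉ Ioo a b := fun h => h.1.not_ge ha
  rw [← deriv_radialFlux_eq_iff isOpen_Ioo isPreconnected_Ioo hs0
    (hf.differentiableOn (by norm_num))]
  exact forall₂_congr fun r hr =>
    two_sub_sq_mul_div_eq_zero_iff (ne_of_mem_of_not_mem hr hs0)

theorem stmt_10 (a b : ℝ) (ha : 0 ≤ a) (hab : a < b) (f : ℝ → ℝ)
    (hf : ContDiffOn ℝ 2 f (Set.Ioo a b)) :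
    (∀ r ∈ Set.Ioo a b,
      (2 - r^2 * deriv (fun r' => r'^2 * deriv (fun s => f s / s^2) r') r) / (12 * r^2) = 0)
    ↔ ∃ b₁ b₂ : ℝ, ∀ r ∈ Set.Ioo a b, f r = 1 + b₁*r + b₂*r^2 :=
  stmt_10_general a b ha f hf
end

section
/- Let f(r) be a C² function on an interval with r > 0 and λ ∈ ℝ. Then (2 - (r²f)'')/r² = 4λ for all r in the interval if and only if f(r) = 1 + a₁/r + a₂/r² - (λ/3)r² for some constants a₁, a₂. -/
/-!
With `g = r² f`, the curvature condition says `g'' = 2 - 4λr²`. The de Sitter profile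
`r² - (λ/3) r⁴` has the same second derivative, so on an interval the difference is affine,
`a₁ r + a₂`; dividing by `r²` gives the stated form of `f`.
-/

open Set

theorem iteratedDeriv_two_eq_deriv_deriv {𝕜 F : Type*} [NontriviallyNormedField 𝕜]
    [NormedAddCommGroup F] [NormedSpace 𝕜 F] (u : 𝕜 → F) :
    iteratedDeriv 2 u = deriv (deriv u) := by
  rw [iteratedDeriv_succ, iteratedDeriv_one]

theorem iteratedDeriv_two_eq_zero_iff_eqOn_affine {𝕜 F : Type*} [RCLike 𝕜]
    [NormedAddCommGroup F] [NormedSpace 𝕜 F] {s : Set 𝕜} (hs : IsOpen s)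
    (hs' : IsPreconnected s) {u : 𝕜 → F} (hu : ContDiffOn 𝕜 2 u s) :
    EqOn (iteratedDeriv 2 u) 0 s ↔ ∃ c d : F, EqOn u (fun x => x • c + d) s := by
  have hline (c : F) : deriv (fun x : 𝕜 => x • c) = fun _ => c := by
    ext x
    simpa using ((hasDerivAt_id x).smul_const c).deriv
  rw [iteratedDeriv_two_eq_deriv_deriv]
  constructor
  · intro h
    obtain ⟨c, hc⟩ := hs.exists_is_const_of_deriv_eq_zero hs'
      ((hu.deriv_of_isOpen hs (m := 1) (by norm_num)).differentiableOn one_ne_zero) h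
    obtain ⟨d, hd⟩ := hs.exists_eq_add_of_deriv_eq hs' (hu.differentiableOn two_ne_zero)
      (g := fun x : 𝕜 => x • c) (by fun_prop) (fun x hx => by simp [hc x hx, hline])
    exact ⟨c, d, hd⟩
  · rintro ⟨c, d, hcd⟩ x hx
    rw [← iteratedDeriv_two_eq_deriv_deriv, hcd.iteratedDeriv_of_isOpen hs 2 hx,
      iteratedDeriv_two_eq_deriv_deriv]
    simp [hline]

theorem iteratedDeriv_two_sq_sub_const_mul_pow_four (c r : ℝ) :
    iteratedDeriv 2 (fun r : ℝ => r ^ 2 - c * r ^ 4) r = 2 - 12 * c * r ^ 2 := by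
  rw [iteratedDeriv_fun_sub (by fun_prop) (by fun_prop), iteratedDeriv_const_mul_field]
  simp only [iteratedDeriv_pow]
  norm_num
  ring

theorem stmt_11_general (a b lam : ℝ) (ha : 0 ≤ a) (f : ℝ → ℝ)
    (hf : ContDiffOn ℝ 2 f (Set.Ioo a b)) :
    (∀ r ∈ Set.Ioo a b,
      (2 - iteratedDeriv 2 (fun r' => r'^2 * f r') r) / r^2 = 4 * lam)
    ↔ ∃ a₁ a₂ : ℝ, ∀ r ∈ Set.Ioo a b,
        f r = 1 + a₁/r + a₂/r^2 - (lam/3) * r^2 := by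
  set g : ℝ → ℝ := fun r => r ^ 2 * f r
  set h : ℝ → ℝ := fun r => r ^ 2 - lam / 3 * r ^ 4
  have hg : ContDiffOn ℝ 2 g (Ioo a b) := (contDiffOn_id.pow 2).mul hf
  have hcurv : ∀ r ∈ Ioo a b,
      (2 - iteratedDeriv 2 g r) / r ^ 2 = 4 * lam ↔ iteratedDeriv 2 (g - h) r = 0 := by
    intro r hr
    have hr0 : r ^ 2 ≠ 0 := by have := ha.trans_lt hr.1; positivity
    rw [iteratedDeriv_sub (hg.contDiffAt (isOpen_Ioo.mem_nhds hr)) (by fun_prop),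
      iteratedDeriv_two_sq_sub_const_mul_pow_four, div_eq_iff hr0, sub_eq_zero]
    constructor <;> intro H <;> linarith
  have hprofile : ∀ c d : ℝ, ∀ r ∈ Ioo a b,
      (g - h) r = r • c + d ↔ f r = 1 + c / r + d / r ^ 2 - lam / 3 * r ^ 2 := by
    intro c d r hr
    have hr0 : r ≠ 0 := (ha.trans_lt hr.1).ne'
    simp only [Pi.sub_apply, smul_eq_mul, g, h]
    field_simp
    constructor <;> intro H <;> linarith
  calc (∀ r ∈ Ioo a b, (2 - iteratedDeriv 2 g r) / r ^ 2 = 4 * lam)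
      ↔ EqOn (iteratedDeriv 2 (g - h)) 0 (Ioo a b) := forall₂_congr hcurv
    _ ↔ ∃ c d : ℝ, EqOn (g - h) (fun x => x • c + d) (Ioo a b) :=
      iteratedDeriv_two_eq_zero_iff_eqOn_affine isOpen_Ioo isPreconnected_Ioo
        (hg.sub (by fun_prop))
    _ ↔ _ := exists₂_congr fun c d => forall₂_congr (hprofile c d)

theorem stmt_11 (a b lam : ℝ) (ha : 0 ≤ a) (hab : a < b) (f : ℝ → ℝ)
    (hf : ContDiffOn ℝ 2 f (Set.Ioo a b)) :
    (∀ r ∈ Set.Ioo a b,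
      (2 - iteratedDeriv 2 (fun r' => r'^2 * f r') r) / r^2 = 4 * lam)
    ↔ ∃ a₁ a₂ : ℝ, ∀ r ∈ Set.Ioo a b,
        f r = 1 + a₁/r + a₂/r^2 - (lam/3) * r^2 :=
  stmt_11_general a b lam ha f hf
end
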